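/- arXiv:1402.1282 — 13 statements merged into one kernel-verified Lean document; each statement's English description precedes it below -/
import Mathlib

section
/- Exact sequence for an abstract Green-hyperbolic operator (linear-algebraic form of the paper's Proposition on the sequence 0 → Γ₀(F) → Γ₀(F̃*) → Γ_SC(F) → Γ_SC(F̃*) → 0): Let (V, W, f, G₊, G₋) be an abstract Green-hyperbolic operator with causal Green function G, admitting an adapted partition of unity. Then the sequence 0 → V₀ →f W₀ →G V_SC →f W_SC → 0 is exact; explicitly: (a) f restricted to V₀ is injective; (b) {w ∈ W₀ : G w = 0} = f(V₀); (c) {v ∈ V_SC : f v = 0} = G(W₀); (d) f(V_SC) = W_SC. -/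
/-- An abstract Green-hyperbolic operator: real vector spaces `V`, `W` with subspaces
of compactly supported (`0`), retarded (`p`), advanced (`m`) and spacelike compactly
supported (`SC`) elements, a linear map `f` preserving the supports, and retarded and
advanced Green functions `Gp`, `Gm` (defined on `Wp`, `Wm` respectively, here modeled
as linear maps on all of `W` whose defining properties are only imposed on `Wp`, `Wm`). -/
structure AGH (V : Type*) (W : Type*) [AddCommGroup V] [Module ℝ V]
    [AddCommGroup W] [Module ℝ W] where
  V0 : Submodule ℝ V
  Vp : Submodule ℝ V
  Vm : Submodule ℝ V
  VSC : Submodule ℝ V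
  W0 : Submodule ℝ W
  Wp : Submodule ℝ W
  Wm : Submodule ℝ W
  WSC : Submodule ℝ W
  hVp : Vp ≤ VSC
  hVm : Vm ≤ VSC
  hV0 : V0 = Vp ⊓ Vm
  hWp : Wp ≤ WSC
  hWm : Wm ≤ WSC
  hW0 : W0 = Wp ⊓ Wm
  f : V →ₗ[ℝ] W
  f_mem_p : ∀ v ∈ Vp, f v ∈ Wp
  f_mem_m : ∀ v ∈ Vm, f v ∈ Wm
  f_mem_sc : ∀ v ∈ VSC, f v ∈ WSC
  Gp : W →ₗ[ℝ] V
  Gm : W →ₗ[ℝ] V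
  Gp_mem : ∀ w ∈ Wp, Gp w ∈ Vp
  Gm_mem : ∀ w ∈ Wm, Gm w ∈ Vm
  Gp_f : ∀ v ∈ Vp, Gp (f v) = v
  Gm_f : ∀ v ∈ Vm, Gm (f v) = v
  f_Gp : ∀ w ∈ Wp, f (Gp w) = w
  f_Gm : ∀ w ∈ Wm, f (Gm w) = w

/-- The causal Green function `G = G₊ − G₋` (meaningful on `W₀ = Wp ⊓ Wm`). -/
def AGH.G {V W : Type*} [AddCommGroup V] [Module ℝ V] [AddCommGroup W] [Module ℝ W]
    (D : AGH V W) : W →ₗ[ℝ] V := D.Gp - D.Gm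

/-- An adapted partition of unity for an abstract Green-hyperbolic operator,
abstracting multiplication by a partition of unity adapted to a Cauchy surface. -/
structure AGH.Partition {V W : Type*} [AddCommGroup V] [Module ℝ V]
    [AddCommGroup W] [Module ℝ W] (D : AGH V W) where
  chiVp : V →ₗ[ℝ] V
  chiVm : V →ₗ[ℝ] V
  chiWp : W →ₗ[ℝ] W
  chiWm : W →ₗ[ℝ] W
  sumV : ∀ v ∈ D.VSC, chiVp v + chiVm v = v
  memVp : ∀ v ∈ D.VSC, chiVp v ∈ D.Vp
  memVm : ∀ v ∈ D.VSC, chiVm v ∈ D.Vm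
  sumW : ∀ w ∈ D.WSC, chiWp w + chiWm w = w
  memWp : ∀ w ∈ D.WSC, chiWp w ∈ D.Wp
  memWm : ∀ w ∈ D.WSC, chiWm w ∈ D.Wm

/-- Exact sequence `0 → V₀ →f W₀ →G V_SC →f W_SC → 0` for an abstract
Green-hyperbolic operator admitting an adapted partition of unity. -/
theorem statement0 {V W : Type*} [AddCommGroup V] [Module ℝ V]
    [AddCommGroup W] [Module ℝ W] (D : AGH V W) (χ : AGH.Partition D) :
    (∀ v ∈ D.V0, D.f v = 0 → v = 0) ∧
    (∀ w ∈ D.W0, (D.G w = 0 ↔ ∃ v ∈ D.V0, D.f v = w)) ∧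
    (∀ v ∈ D.VSC, (D.f v = 0 ↔ ∃ w ∈ D.W0, D.G w = v)) ∧
    (∀ w ∈ D.WSC, ∃ v ∈ D.VSC, D.f v = w) := by
  have hV0p : D.V0 ≤ D.Vp := D.hV0 ▸ inf_le_left
  have hV0m : D.V0 ≤ D.Vm := D.hV0 ▸ inf_le_right
  have hW0p : D.W0 ≤ D.Wp := D.hW0 ▸ inf_le_left
  have hW0m : D.W0 ≤ D.Wm := D.hW0 ▸ inf_le_right
  refine ⟨?_, ?_, ?_, ?_⟩
  · intro v hv hfv
    have := D.Gp_f v (hV0p hv)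
    rw [hfv, map_zero] at this
    exact this.symm
  · intro w hw
    constructor
    · intro hG
      have h : D.Gp w = D.Gm w := sub_eq_zero.mp hG
      refine ⟨D.Gp w, ?_, D.f_Gp w (hW0p hw)⟩
      rw [D.hV0]
      exact ⟨D.Gp_mem w (hW0p hw), h ▸ D.Gm_mem w (hW0m hw)⟩
    · rintro ⟨v, hv, hfv⟩
      have h1 : D.Gp (D.f v) = v := D.Gp_f v (hV0p hv)
      have h2 : D.Gm (D.f v) = v := D.Gm_f v (hV0m hv)
      show D.Gp w - D.Gm w = 0
      rw [← hfv, h1, h2, sub_self]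
  · intro v hv
    constructor
    · intro hfv
      set vp := χ.chiVp v with hvp
      set vm := χ.chiVm v with hvm
      have hsum : vp + vm = v := χ.sumV v hv
      have hvpm : vp ∈ D.Vp := χ.memVp v hv
      have hvmm : vm ∈ D.Vm := χ.memVm v hv
      set w := D.f vp with hwdef
      have hwm : w = D.f (-vm) := by
        have : D.f vp + D.f vm = 0 := by rw [← map_add, hsum, hfv]
        rw [map_neg]; exact eq_neg_of_add_eq_zero_left this
      have hwWp : w ∈ D.Wp := D.f_mem_p vp hvpm
      have hwWm : w ∈ D.Wm := hwm ▸ D.f_mem_m (-vm) (neg_mem hvmm)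
      refine ⟨w, ?_, ?_⟩
      · rw [D.hW0]; exact ⟨hwWp, hwWm⟩
      · show D.Gp w - D.Gm w = v
        have h1 : D.Gp w = vp := D.Gp_f vp hvpm
        have h2 : D.Gm w = -vm := by rw [hwm]; exact D.Gm_f (-vm) (neg_mem hvmm)
        rw [h1, h2, sub_neg_eq_add, hsum]
    · rintro ⟨w, hw, hGw⟩
      have : D.f (D.Gp w - D.Gm w) = 0 := by
        rw [map_sub, D.f_Gp w (hW0p hw), D.f_Gm w (hW0m hw), sub_self]
      rw [← hGw]; exact this
  · intro w hw
    set wp := χ.chiWp w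
    set wm := χ.chiWm w
    have hwpm : wp ∈ D.Wp := χ.memWp w hw
    have hwmm : wm ∈ D.Wm := χ.memWm w hw
    refine ⟨D.Gp wp + D.Gm wm, ?_, ?_⟩
    · exact add_mem (D.hVp (D.Gp_mem wp hwpm)) (D.hVm (D.Gm_mem wm hwmm))
    · rw [map_add, D.f_Gp wp hwpm, D.f_Gm wm hwmm, χ.sumW w hw]
end

section
/- Splitting map G_χ and surjectivity onto spacelike compactly supported dual densities (second part of the paper's Lemma on splitting the exact sequence): Let (V, W, f, G₊, G₋) be an abstract Green-hyperbolic operator, and let (χ₊, χ₋) be an adapted partition of unity. Define G_χ : W_SC → V by G_χ w = G₊(χ₊ w) + G₋(χ₋ w). Then G_χ(W_SC) ⊆ V_SC and f(G_χ w) = w for every w ∈ W_SC; in particular f : V_SC → W_SC is surjective. -/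
/-- Splitting map `G_χ w = G₊ (χ₊ w) + G₋ (χ₋ w)`: it maps `W_SC` into `V_SC`, is a
right inverse of `f` there, and in particular `f : V_SC → W_SC` is surjective. -/
theorem statement2 {V W : Type*} [AddCommGroup V] [Module ℝ V]
    [AddCommGroup W] [Module ℝ W] (D : AGH V W) (χ : AGH.Partition D) :
    ∀ w ∈ D.WSC,
      (D.Gp (χ.chiWp w) + D.Gm (χ.chiWm w) ∈ D.VSC) ∧
      D.f (D.Gp (χ.chiWp w) + D.Gm (χ.chiWm w)) = w ∧
      ∃ v ∈ D.VSC, D.f v = w := by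
  intro w hw
  have hp := χ.memWp w hw
  have hm := χ.memWm w hw
  have hmem : D.Gp (χ.chiWp w) + D.Gm (χ.chiWm w) ∈ D.VSC :=
    D.VSC.add_mem (D.hVp (D.Gp_mem _ hp)) (D.hVm (D.Gm_mem _ hm))
  have hf : D.f (D.Gp (χ.chiWp w) + D.Gm (χ.chiWm w)) = w := by
    rw [map_add, D.f_Gp _ hp, D.f_Gm _ hm, χ.sumW w hw]
  exact ⟨hmem, hf, _, hmem, hf⟩
end

section
/- Solvability of the constrained retarded/advanced inhomogeneous problem (the paper's Lemma on the inhomogeneous problem with constraints): In a constrained abstract Green-hyperbolic system, for every β ∈ W₀ and γ ∈ X₊ there exists φ ∈ V₊ with f φ = β and c φ = γ if and only if h γ = q β; moreover, in that case φ = G₊ β is such a solution. The same statement holds with the subscript + replaced by − throughout. -/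
/-- Solvability of the constrained retarded/advanced inhomogeneous problem:
in a constrained abstract Green-hyperbolic system (`D` the hyperbolic subsystem,
`Dh` the consistency subsystem with `h = Dh.f`, `H± = Dh.Gp/Gm`, `c` the constraint
operator, `q` the intertwiner), for `β ∈ W₀` and `γ ∈ X₊` (resp. `X₋`) there exists
`φ ∈ V₊` (resp. `V₋`) with `f φ = β` and `c φ = γ` iff `h γ = q β`; in that case
`φ = G₊ β` (resp. `G₋ β`) is such a solution. -/
theorem statement3 {V W X Y : Type*} [AddCommGroup V] [Module ℝ V]
    [AddCommGroup W] [Module ℝ W] [AddCommGroup X] [Module ℝ X]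
    [AddCommGroup Y] [Module ℝ Y]
    (D : AGH V W) (Dh : AGH X Y)
    (c : V →ₗ[ℝ] X) (q : W →ₗ[ℝ] Y)
    (hq0 : ∀ w ∈ D.W0, q w ∈ Dh.W0)
    (hhc : ∀ v : V, Dh.f (c v) = q (D.f v))
    (hcGp : ∀ w ∈ D.W0, c (D.Gp w) = Dh.Gp (q w))
    (hcGm : ∀ w ∈ D.W0, c (D.Gm w) = Dh.Gm (q w)) :
    (∀ β ∈ D.W0, ∀ γ ∈ Dh.Vp,
      ((∃ φ ∈ D.Vp, D.f φ = β ∧ c φ = γ) ↔ Dh.f γ = q β) ∧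
      (Dh.f γ = q β →
        D.Gp β ∈ D.Vp ∧ D.f (D.Gp β) = β ∧ c (D.Gp β) = γ)) ∧
    (∀ β ∈ D.W0, ∀ γ ∈ Dh.Vm,
      ((∃ φ ∈ D.Vm, D.f φ = β ∧ c φ = γ) ↔ Dh.f γ = q β) ∧
      (Dh.f γ = q β →
        D.Gm β ∈ D.Vm ∧ D.f (D.Gm β) = β ∧ c (D.Gm β) = γ)) := by
  constructor
  · intro β hβ γ hγ
    have hβp : β ∈ D.Wp := by rw [D.hW0] at hβ; exact hβ.1
    have key : Dh.f γ = q β → D.Gp β ∈ D.Vp ∧ D.f (D.Gp β) = β ∧ c (D.Gp β) = γ := by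
      intro h
      refine ⟨D.Gp_mem β hβp, D.f_Gp β hβp, ?_⟩
      rw [hcGp β hβ, ← h, Dh.Gp_f γ hγ]
    refine ⟨⟨?_, fun h => ⟨D.Gp β, (key h).1, (key h).2⟩⟩, key⟩
    rintro ⟨φ, _, hf, hc⟩
    rw [← hc, hhc, hf]
  · intro β hβ γ hγ
    have hβm : β ∈ D.Wm := by rw [D.hW0] at hβ; exact hβ.2
    have key : Dh.f γ = q β → D.Gm β ∈ D.Vm ∧ D.f (D.Gm β) = β ∧ c (D.Gm β) = γ := by
      intro h
      refine ⟨D.Gm_mem β hβm, D.f_Gm β hβm, ?_⟩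
      rw [hcGm β hβ, ← h, Dh.Gm_f γ hγ]
    refine ⟨⟨?_, fun h => ⟨D.Gm β, (key h).1, (key h).2⟩⟩, key⟩
    rintro ⟨φ, _, hf, hc⟩
    rw [← hc, hhc, hf]
end

section
/- Nondegeneracy of the gauge-invariant pairing on field configurations (abstract form of the paper's Lemma on the formal gauge invariant full tangent and cotangent spaces): Let V_SC and W₀ be real vector spaces and B : V_SC × W₀ → ℝ a bilinear map that is nondegenerate in both arguments (if B(v, w) = 0 for all w ∈ W₀ then v = 0, and if B(v, w) = 0 for all v ∈ V_SC then w = 0), and let globally recognizable abstract gauge data over (V_SC, W₀, B) be given. Then the bilinear map (V_SC / g(P_SC)) × {w ∈ W₀ : g⋆ w = 0} → ℝ, ([v], w) ↦ B(v, w), is well-defined and nondegenerate in both arguments. -/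
/-- Abstract gauge data over `(V_SC, W₀, B)`: gauge generator `g`, its adjoint `gs`,
gauge-invariant field combinations `g'`, its adjoint `g's`, with the composition laws
`g' ∘ g = 0` and `gs ∘ g's = 0`, and auxiliary pairings `D`, `E` implementing the
adjointness laws, `E` being nondegenerate against the range of `g'`. -/
structure GaugeData (VSC W0 PSC Z0 USC Q0 : Type*)
    [AddCommGroup VSC] [Module ℝ VSC] [AddCommGroup W0] [Module ℝ W0]
    [AddCommGroup PSC] [Module ℝ PSC] [AddCommGroup Z0] [Module ℝ Z0]
    [AddCommGroup USC] [Module ℝ USC] [AddCommGroup Q0] [Module ℝ Q0]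
    (B : VSC →ₗ[ℝ] W0 →ₗ[ℝ] ℝ) where
  g : PSC →ₗ[ℝ] VSC
  gs : W0 →ₗ[ℝ] Z0
  g' : VSC →ₗ[ℝ] USC
  g's : Q0 →ₗ[ℝ] W0
  gg' : ∀ ε : PSC, g' (g ε) = 0
  gsg's : ∀ τ : Q0, gs (g's τ) = 0
  D : PSC →ₗ[ℝ] Z0 →ₗ[ℝ] ℝ
  E : USC →ₗ[ℝ] Q0 →ₗ[ℝ] ℝ
  adjD : ∀ (ε : PSC) (w : W0), B (g ε) w = D ε (gs w)
  adjE : ∀ (v : VSC) (τ : Q0), B v (g's τ) = E (g' v) τ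
  End : ∀ v : VSC, (∀ τ : Q0, E (g' v) τ = 0) → g' v = 0

/-- Global recognizability: the induced pairing on
`({v : g' v = 0} / g(P_SC)) × ({w : g⋆ w = 0} / g'⋆(Q₀))` is nondegenerate in both
arguments. -/
def GaugeData.GloballyRecognizable {VSC W0 PSC Z0 USC Q0 : Type*}
    [AddCommGroup VSC] [Module ℝ VSC] [AddCommGroup W0] [Module ℝ W0]
    [AddCommGroup PSC] [Module ℝ PSC] [AddCommGroup Z0] [Module ℝ Z0]
    [AddCommGroup USC] [Module ℝ USC] [AddCommGroup Q0] [Module ℝ Q0]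
    {B : VSC →ₗ[ℝ] W0 →ₗ[ℝ] ℝ} (gd : GaugeData VSC W0 PSC Z0 USC Q0 B) : Prop :=
  (∀ v : VSC, gd.g' v = 0 →
    (∀ w : W0, gd.gs w = 0 → B v w = 0) → ∃ ε : PSC, v = gd.g ε) ∧
  (∀ w : W0, gd.gs w = 0 →
    (∀ v : VSC, gd.g' v = 0 → B v w = 0) → ∃ τ : Q0, w = gd.g's τ)

/-- Nondegeneracy of the gauge-invariant pairing on field configurations: if `B` is
nondegenerate in both arguments and the gauge data is globally recognizable, then the
pairing `(V_SC / g(P_SC)) × {w ∈ W₀ : g⋆ w = 0} → ℝ`, `([v], w) ↦ B v w`, is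
well-defined and nondegenerate in both arguments. -/
theorem statement7 {VSC W0 PSC Z0 USC Q0 : Type*}
    [AddCommGroup VSC] [Module ℝ VSC] [AddCommGroup W0] [Module ℝ W0]
    [AddCommGroup PSC] [Module ℝ PSC] [AddCommGroup Z0] [Module ℝ Z0]
    [AddCommGroup USC] [Module ℝ USC] [AddCommGroup Q0] [Module ℝ Q0]
    (B : VSC →ₗ[ℝ] W0 →ₗ[ℝ] ℝ)
    (hB1 : ∀ v : VSC, (∀ w : W0, B v w = 0) → v = 0)
    (hB2 : ∀ w : W0, (∀ v : VSC, B v w = 0) → w = 0)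
    (gd : GaugeData VSC W0 PSC Z0 USC Q0 B)
    (hrec : gd.GloballyRecognizable) :
    (∀ v v' : VSC, (∃ ε : PSC, v - v' = gd.g ε) →
      ∀ w : W0, gd.gs w = 0 → B v w = B v' w) ∧
    (∀ v : VSC, (∀ w : W0, gd.gs w = 0 → B v w = 0) → ∃ ε : PSC, v = gd.g ε) ∧
    (∀ w : W0, gd.gs w = 0 → (∀ v : VSC, B v w = 0) → w = 0) := by
  refine ⟨?_, ?_, ?_⟩
  · rintro v v' ⟨ε, hε⟩ w hw
    have h : B (v - v') w = 0 := by
      rw [hε, gd.adjD, hw, map_zero]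
    have := h
    simp only [map_sub, LinearMap.sub_apply] at this
    linarith
  · intro v hv
    have hgv : gd.g' v = 0 := by
      apply gd.End
      intro τ
      rw [← gd.adjE]
      exact hv _ (gd.gsg's τ)
    exact hrec.1 v hgv hv
  · intro w _ h
    exact hB2 w h
end

section
/- The Peierls Green function annihilates the image of the Jacobi operator up to gauge (item (2), first part, in the proof of the paper's Theorem on the gauge fixed Jacobi system): Let (V, W, f, G₊, G₋) be an abstract Green-hyperbolic operator with causal Green function G, and let (P, T, k, K₊, K₋) be an abstract Green-hyperbolic operator (on spaces P, T with subspaces P₀, P₊, P₋, P_SC and T₀, T₊, T₋, T_SC) with causal Green function K : T₀ → P_SC. Let J : V → W, c_g : V → X_g, r̄ : W → W, r̄_c : X_g → W, s : T → W, r̄_s : V → T, g : P_SC → V_SC be linear maps with: f = r̄ ∘ J + r̄_c ∘ c_g; r̄_c ∘ c_g = s ∘ r̄_s; J(V₀) ⊆ W₀, r̄(W₀) ⊆ W₀, r̄_s(V₀) ⊆ T₀, s(T₀) ⊆ W₀; and G₊(s t) = g(K₊ t), G₋(s t) = g(K₋ t) for all t ∈ T₀. Define the Peierls Green function E = G ∘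 r̄ : W₀ → V_SC. Then for every ξ ∈ V₀: E(J ξ) = −g(K(r̄_s ξ)); in particular E(J ξ) lies in g(P_SC). -/
/-- The Peierls Green function `E = G ∘ r̄` annihilates the image of the Jacobi
operator up to gauge: under the linearized equivalence `f = r̄ ∘ J + r̄_c ∘ c_g`,
the factorized gauge-fixing compatibility condition `r̄_c ∘ c_g = s ∘ r̄_s`, the
listed support conditions and the intertwining relations `G± ∘ s = g ∘ K±` on `T₀`,
for every `ξ ∈ V₀` one has `E (J ξ) = − g (K (r̄_s ξ))`; in particular `E (J ξ)`
lies in `g(P_SC)`. Here `D` is the abstract Green-hyperbolic operator `f` on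
`(V, W)` and `Dk` the one `k` on `(P, T)` (so `T₀ = Dk.W0`, `P_SC = Dk.VSC`,
`K± = Dk.Gp/Gm`, `K = Dk.G`). -/
theorem statement10 {V W P T Xg : Type*}
    [AddCommGroup V] [Module ℝ V] [AddCommGroup W] [Module ℝ W]
    [AddCommGroup P] [Module ℝ P] [AddCommGroup T] [Module ℝ T]
    [AddCommGroup Xg] [Module ℝ Xg]
    (D : AGH V W) (Dk : AGH P T)
    (J : V →ₗ[ℝ] W) (cg : V →ₗ[ℝ] Xg)
    (rbar : W →ₗ[ℝ] W) (rbarc : Xg →ₗ[ℝ] W)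
    (s : T →ₗ[ℝ] W) (rbars : V →ₗ[ℝ] T) (g : P →ₗ[ℝ] V)
    (hf : ∀ v : V, D.f v = rbar (J v) + rbarc (cg v))
    (hcompat : ∀ v : V, rbarc (cg v) = s (rbars v))
    (hJ0 : ∀ v ∈ D.V0, J v ∈ D.W0)
    (hrbar0 : ∀ w ∈ D.W0, rbar w ∈ D.W0)
    (hrbars0 : ∀ v ∈ D.V0, rbars v ∈ Dk.W0)
    (hs0 : ∀ t ∈ Dk.W0, s t ∈ D.W0)
    (hGpS : ∀ t ∈ Dk.W0, D.Gp (s t) = g (Dk.Gp t))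
    (hGmS : ∀ t ∈ Dk.W0, D.Gm (s t) = g (Dk.Gm t)) :
    ∀ ξ ∈ D.V0,
      D.G (rbar (J ξ)) = - g (Dk.G (rbars ξ)) ∧
      ∃ p ∈ Dk.VSC, D.G (rbar (J ξ)) = g p := by
  intro ξ hξ
  have hξp : ξ ∈ D.Vp := by rw [D.hV0] at hξ; exact hξ.1
  have hξm : ξ ∈ D.Vm := by rw [D.hV0] at hξ; exact hξ.2
  have ht : rbars ξ ∈ Dk.W0 := hrbars0 ξ hξ
  have hGf : D.G (D.f ξ) = 0 := by
    simp [AGH.G, D.Gp_f ξ hξp, D.Gm_f ξ hξm]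
  have hsplit : D.f ξ = rbar (J ξ) + s (rbars ξ) := by
    rw [hf ξ, hcompat ξ]
  have hGs : D.G (s (rbars ξ)) = g (Dk.G (rbars ξ)) := by
    simp [AGH.G, hGpS _ ht, hGmS _ ht, map_sub]
  have key : D.G (rbar (J ξ)) = - g (Dk.G (rbars ξ)) := by
    have h := hGf
    rw [hsplit, map_add, hGs] at h
    exact eq_neg_of_add_eq_zero_left h
  have htp : rbars ξ ∈ Dk.Wp := by rw [Dk.hW0] at ht; exact ht.1
  have htm : rbars ξ ∈ Dk.Wm := by rw [Dk.hW0] at ht; exact ht.2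
  have hmem : Dk.G (rbars ξ) ∈ Dk.VSC := by
    have : Dk.G (rbars ξ) = Dk.Gp (rbars ξ) - Dk.Gm (rbars ξ) := rfl
    rw [this]
    exact sub_mem (Dk.hVp (Dk.Gp_mem _ htp)) (Dk.hVm (Dk.Gm_mem _ htm))
  exact ⟨key, -(Dk.G (rbars ξ)), neg_mem hmem, by rw [key, map_neg]⟩
end

section
/- Every spacelike compactly supported Jacobi solution splits as the Peierls Green function of its Cauchy-surface splitting plus a pure gauge term (item (3), second part, in the proof of the paper's Theorem on the gauge fixed Jacobi system): Let (V, W, f, G₊, G₋) be an abstract Green-hyperbolic operator with causal Green function G and adapted partition of unity (χ₊, χ₋) on the V side, and let (P, T, k, K₊, K₋) be an abstract Green-hyperbolic operator with retarded and advanced Green functions K₊, K₋. Let X, Y, X_g be real vector spaces and J : V → W, c : V → X, q : W → Y, h : X → Y, r : W → W, r_c : X → W, r_g : X → X_g, r̄ : W → W, r̄_c : X_g → W, c_g : V → X_g, p_f : Y → W, s : T → W, r̄_s : V → T, g : P_SC → V_SC be linear maps with: J = r ∘ f + r_c ∘ c; c_g = r_g ∘ c; q ∘ f = h ∘ c; r̄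 ∘ r = id_W + p_f ∘ q; r̄ ∘ r_c + r̄_c ∘ r_g = −p_f ∘ h; r̄_c ∘ c_g = s ∘ r̄_s; the support conditions J(V₊) ⊆ W₊, J(V₋) ⊆ W₋, r̄(W₀) ⊆ W₀, r̄_s(V₊) ⊆ T₊, r̄_s(V₋) ⊆ T₋, s(T₊) ⊆ W₊, s(T₋) ⊆ W₋; and G₊(s t) = g(K₊ t) for t ∈ T₊, G₋(s t) = g(K₋ t) for t ∈ T₋. Define E = G ∘ r̄ : W₀ → V_SC. Then for every ψ ∈ V_SC with J ψ = 0: J(χ₊ ψ) ∈ W₀, J(χ₊ ψ) = −J(χ₋ ψ), and E(J(χ₊ ψ)) = ψ − g(K₊(r̄_s(χ₊ ψ)) + K₋(r̄_s(χ₋ ψ))); in particular ψ − E(J(χ₊ ψ)) lies in g(P_SC). -/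
/-- Every spacelike compactly supported Jacobi solution splits as the Peierls Green
function `E = G ∘ r̄` of its Cauchy-surface splitting plus a pure gauge term: under
the linearized equivalence (`J = r ∘ f + r_c ∘ c`, `c_g = r_g ∘ c`,
`r̄ ∘ r = id + p_f ∘ q`, `r̄ ∘ r_c + r̄_c ∘ r_g = − p_f ∘ h`), the constraint
identity `q ∘ f = h ∘ c`, the factorized gauge-fixing compatibility condition
`r̄_c ∘ c_g = s ∘ r̄_s`, the listed support conditions and the intertwining
relations `G± ∘ s = g ∘ K±`, for every `ψ ∈ V_SC` with `J ψ = 0`: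
`J (χ₊ ψ) ∈ W₀`, `J (χ₊ ψ) = − J (χ₋ ψ)`, and
`E (J (χ₊ ψ)) = ψ − g (K₊ (r̄_s (χ₊ ψ)) + K₋ (r̄_s (χ₋ ψ)))`; in particular
`ψ − E (J (χ₊ ψ))` lies in `g(P_SC)`. Here `Dk` is the abstract Green-hyperbolic
operator `k` on `(P, T)`, so `K± = Dk.Gp/Gm` and `P_SC = Dk.VSC`, and `(χ₊, χ₋)`
is an adapted partition of unity on the `V` side. -/
theorem statement11 {V W X Y Xg P T : Type*}
    [AddCommGroup V] [Module ℝ V] [AddCommGroup W] [Module ℝ W]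
    [AddCommGroup X] [Module ℝ X] [AddCommGroup Y] [Module ℝ Y]
    [AddCommGroup Xg] [Module ℝ Xg]
    [AddCommGroup P] [Module ℝ P] [AddCommGroup T] [Module ℝ T]
    (D : AGH V W) (Dk : AGH P T)
    (J : V →ₗ[ℝ] W) (c : V →ₗ[ℝ] X) (q : W →ₗ[ℝ] Y) (h : X →ₗ[ℝ] Y)
    (r : W →ₗ[ℝ] W) (rc : X →ₗ[ℝ] W) (rg : X →ₗ[ℝ] Xg)
    (rbar : W →ₗ[ℝ] W) (rbarc : Xg →ₗ[ℝ] W) (cg : V →ₗ[ℝ] Xg)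
    (pf : Y →ₗ[ℝ] W) (s : T →ₗ[ℝ] W) (rbars : V →ₗ[ℝ] T) (g : P →ₗ[ℝ] V)
    (chip chim : V →ₗ[ℝ] V)
    (hJ : ∀ v : V, J v = r (D.f v) + rc (c v))
    (hcg : ∀ v : V, cg v = rg (c v))
    (hqf : ∀ v : V, q (D.f v) = h (c v))
    (hrr : ∀ w : W, rbar (r w) = w + pf (q w))
    (hrc : ∀ x : X, rbar (rc x) + rbarc (rg x) = - pf (h x))
    (hcompat : ∀ v : V, rbarc (cg v) = s (rbars v))
    (hJp : ∀ v ∈ D.Vp, J v ∈ D.Wp)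
    (hJm : ∀ v ∈ D.Vm, J v ∈ D.Wm)
    (hrbar0 : ∀ w ∈ D.W0, rbar w ∈ D.W0)
    (hrbarsp : ∀ v ∈ D.Vp, rbars v ∈ Dk.Wp)
    (hrbarsm : ∀ v ∈ D.Vm, rbars v ∈ Dk.Wm)
    (hsp : ∀ t ∈ Dk.Wp, s t ∈ D.Wp)
    (hsm : ∀ t ∈ Dk.Wm, s t ∈ D.Wm)
    (hGpS : ∀ t ∈ Dk.Wp, D.Gp (s t) = g (Dk.Gp t))
    (hGmS : ∀ t ∈ Dk.Wm, D.Gm (s t) = g (Dk.Gm t))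
    (hchisum : ∀ v ∈ D.VSC, chip v + chim v = v)
    (hchip : ∀ v ∈ D.VSC, chip v ∈ D.Vp)
    (hchim : ∀ v ∈ D.VSC, chim v ∈ D.Vm) :
    ∀ ψ ∈ D.VSC, J ψ = 0 →
      J (chip ψ) ∈ D.W0 ∧
      J (chip ψ) = - J (chim ψ) ∧
      D.G (rbar (J (chip ψ)))
        = ψ - g (Dk.Gp (rbars (chip ψ)) + Dk.Gm (rbars (chim ψ))) ∧
      ∃ p ∈ Dk.VSC, ψ - D.G (rbar (J (chip ψ))) = g p := by
  intro ψ hψ hJψ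
  have hψp := hchip ψ hψ
  have hψm := hchim ψ hψ
  have hsum := hchisum ψ hψ
  have hneg : J (chip ψ) = - J (chim ψ) := by
    have h0 : J (chip ψ) + J (chim ψ) = 0 := by
      rw [← map_add, hsum, hJψ]
    exact eq_neg_of_add_eq_zero_left h0
  have hmemW0 : J (chip ψ) ∈ D.W0 := by
    rw [D.hW0]
    exact ⟨hJp _ hψp, by rw [hneg]; exact Submodule.neg_mem _ (hJm _ hψm)⟩
  have key : ∀ v : V, rbar (J v) = D.f v - s (rbars v) := by
    intro v
    have h1 : rbar (rc (c v)) = - pf (h (c v)) - rbarc (rg (c v)) := by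
      have := hrc (c v); rw [← this]; abel
    rw [hJ, map_add, hrr, h1, hqf, ← hcg, hcompat]
    abel
  have hGp : D.Gp (rbar (J (chip ψ))) = chip ψ - g (Dk.Gp (rbars (chip ψ))) := by
    rw [key, map_sub, D.Gp_f _ hψp, hGpS _ (hrbarsp _ hψp)]
  have hGm : D.Gm (rbar (J (chip ψ))) = - (chim ψ - g (Dk.Gm (rbars (chim ψ)))) := by
    rw [hneg, map_neg, key, map_neg, map_sub, D.Gm_f _ hψm, hGmS _ (hrbarsm _ hψm)]
  have hG : D.G (rbar (J (chip ψ)))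
      = ψ - g (Dk.Gp (rbars (chip ψ)) + Dk.Gm (rbars (chim ψ))) := by
    simp only [AGH.G, LinearMap.sub_apply, hGp, hGm, map_add]
    set a := g (Dk.Gp (rbars (chip ψ))) with ha
    set b := g (Dk.Gm (rbars (chim ψ))) with hb
    rw [show ψ - (a + b) = chip ψ + chim ψ - (a + b) from by rw [hsum]]
    abel
  refine ⟨hmemW0, hneg, hG, ⟨_, ?_, by rw [hG]; abel⟩⟩
  exact Submodule.add_mem _ (Dk.hVp (Dk.Gp_mem _ (hrbarsp _ hψp)))
    (Dk.hVm (Dk.Gm_mem _ (hrbarsm _ hψm)))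
end

section
/- Characterization of the image of the Jacobi operator on spacelike compactly supported sections (item (4) in the proof of the paper's Theorem on the gauge fixed Jacobi system): Let V, W, Q, M, X̃ be real vector spaces with subspaces V_SC ⊆ V, W_SC ⊆ W, Q_SC ⊆ Q, M_SC ⊆ M, and let J : V → W, J₂ : V → Q, g'⋆ : Q → W, f† : V → W, c_g† : X̃ → W, r̄_c† : V → X̃, r̄† : V → V, s'† : M → V, k'† : M → Q, κ : Q_SC → M_SC be linear maps with: J = g'⋆ ∘ J₂; f† = J ∘ r̄† + c_g† ∘ r̄_c†; c_g†(r̄_c†(s'† x)) = 0 for all x ∈ M; f†(s'† x) = g'⋆(k'† x) for all x ∈ M; k'†(κ β) = β for all β ∈ Q_SC; and the support conditions J₂(V_SC) ⊆ Q_SC, g'⋆(Q_SC) ⊆ W_SC, s'†(M_SC) ⊆ V_SC, r̄†(V_SC) ⊆ V_SC, κ(Q_SC) ⊆ M_SC. Then for every α ∈ W_SC: there exists ψ ∈ V_SC with J ψ = α if and only if there exists β ∈ Q_SC with g'⋆ β = α; and in the latter case ψ = r̄†(s'†(κ β)) satisfies J ψ = α. -/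
/-- Characterization of the image of the Jacobi operator on spacelike compactly
supported sections: given the factorization `J = g'⋆ ∘ J₂`, the adjoint equivalence
`f† = J ∘ r̄† + c_g† ∘ r̄_c†`, the adjoint gauge-fixing compatibility condition
`c_g† ∘ r̄_c† ∘ s'† = 0`, the adjoint intertwining relation `f† ∘ s'† = g'⋆ ∘ k'†`,
the splitting map `κ` with `k'† ∘ κ = id` on `Q_SC`, and the listed support
conditions, for every `α ∈ W_SC`: `α ∈ J(V_SC)` iff `α ∈ g'⋆(Q_SC)`, and in the
latter case `ψ = r̄† (s'† (κ β))` satisfies `J ψ = α` (and lies in `V_SC`). -/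
theorem statement12 {V W Q M Xt : Type*}
    [AddCommGroup V] [Module ℝ V] [AddCommGroup W] [Module ℝ W]
    [AddCommGroup Q] [Module ℝ Q] [AddCommGroup M] [Module ℝ M]
    [AddCommGroup Xt] [Module ℝ Xt]
    (VSC : Submodule ℝ V) (WSC : Submodule ℝ W)
    (QSC : Submodule ℝ Q) (MSC : Submodule ℝ M)
    (J : V →ₗ[ℝ] W) (J2 : V →ₗ[ℝ] Q) (g's : Q →ₗ[ℝ] W)
    (fd : V →ₗ[ℝ] W) (cgd : Xt →ₗ[ℝ] W) (rbcd : V →ₗ[ℝ] Xt)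
    (rbd : V →ₗ[ℝ] V) (s'd : M →ₗ[ℝ] V) (k'd : M →ₗ[ℝ] Q) (κ : Q →ₗ[ℝ] M)
    (hJfact : ∀ v : V, J v = g's (J2 v))
    (hfd : ∀ v : V, fd v = J (rbd v) + cgd (rbcd v))
    (hcompat : ∀ x : M, cgd (rbcd (s'd x)) = 0)
    (hfs : ∀ x : M, fd (s'd x) = g's (k'd x))
    (hκ : ∀ β ∈ QSC, k'd (κ β) = β)
    (hJ2mem : ∀ v ∈ VSC, J2 v ∈ QSC)
    (hg'smem : ∀ q ∈ QSC, g's q ∈ WSC)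
    (hs'dmem : ∀ m ∈ MSC, s'd m ∈ VSC)
    (hrbdmem : ∀ v ∈ VSC, rbd v ∈ VSC)
    (hκmem : ∀ β ∈ QSC, κ β ∈ MSC) :
    ∀ α ∈ WSC,
      ((∃ ψ ∈ VSC, J ψ = α) ↔ (∃ β ∈ QSC, g's β = α)) ∧
      (∀ β ∈ QSC, g's β = α →
        rbd (s'd (κ β)) ∈ VSC ∧ J (rbd (s'd (κ β))) = α) := by
  intro α hα
  have key : ∀ β ∈ QSC, g's β = α →
      rbd (s'd (κ β)) ∈ VSC ∧ J (rbd (s'd (κ β))) = α := by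
    intro β hβ hgβ
    refine ⟨hrbdmem _ (hs'dmem _ (hκmem _ hβ)), ?_⟩
    have h1 := hfd (s'd (κ β))
    rw [hcompat (κ β), add_zero, hfs (κ β), hκ β hβ] at h1
    rw [← h1, hgβ]
  refine ⟨⟨?_, ?_⟩, key⟩
  · rintro ⟨ψ, hψ, rfl⟩
    exact ⟨J2 ψ, hJ2mem _ hψ, (hJfact ψ).symm⟩
  · rintro ⟨β, hβ, hgβ⟩
    exact ⟨_, (key β hβ hgβ).1, (key β hβ hgβ).2⟩
end

section
/- Gauge-trivial cotangent representatives lie in the image of the Jacobi operator on compactly supported sections (the paper's Lemma preceding the Theorem on the gauge fixed Jacobi system, in the corrected form used in its proof): Let V, W, Λ, Ξ, R, T, P be real vector spaces with subspaces V₀ ⊆ V₊ ⊆ V, W₀ ⊆ W, Λ₀ ⊆ Λ₊ ⊆ Λ, Ξ₊ ⊆ Ξ, and let J : V → W, f† : V → W, c† : Λ → W, q† : Ξ → V, h† : Ξ → Λ, H†₊ : Λ₊ → Ξ₊, g⋆ : W → T, s† : V → R, k† : R → T, r̄† : V → V, r̄_s† : R → W, r̄_J† : Λ → V, q_J† : Ξ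 → P, g : P → V be linear maps satisfying: f† = J ∘ r̄† + r̄_s† ∘ s†; f†(q† x) = c†(h† x) for all x ∈ Ξ; k†(s† v) = g⋆(f† v) for all v ∈ V; h†(H†₊ μ) = μ for all μ ∈ Λ₊; k† is injective on s†(V₊); r̄†(q† x) = r̄_J†(h† x) + g(q_J† x) for all x ∈ Ξ; J(g p) = 0 for all p ∈ P; and the support conditions q†(Ξ₊) ⊆ V₊, H†₊(Λ₀) ⊆ Ξ₊, r̄†(V₀) ⊆ V₀, r̄_J†(Λ₀) ⊆ V₀. Then every α ∈ W₀ of the form α = f† ψ + c† λ, with ψ ∈ V₀ and λ ∈ Λ₀, that satisfies g⋆ α = 0 can be written as α = J(r̄† ψ + r̄_J† λ); in particular α ∈ J(V₀). -/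
/-- Gauge-trivial cotangent representatives lie in the image of the Jacobi operator
on compactly supported sections: under the adjoint equivalence
`f† = J ∘ r̄† + r̄_s† ∘ s†`, the adjoint consistency identity `f† ∘ q† = c† ∘ h†`,
the adjoint intertwining relation `k† ∘ s† = g⋆ ∘ f†`, the retarded Green function
`H†₊` of `h†` (`h† ∘ H†₊ = id` on `Λ₊`), injectivity of `k†` on `s†(V₊)`, the adjoint
consistency identity `r̄† ∘ q† = r̄_J† ∘ h† + g ∘ q_J†`, Noether's second theorem
`J ∘ g = 0`, and the listed support conditions, every `α ∈ W₀` of the form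
`α = f† ψ + c† λ` with `ψ ∈ V₀`, `λ ∈ Λ₀` and `g⋆ α = 0` satisfies
`α = J (r̄† ψ + r̄_J† λ)`; in particular `α ∈ J(V₀)`. -/
theorem statement13 {V W L Xi R T P : Type*}
    [AddCommGroup V] [Module ℝ V] [AddCommGroup W] [Module ℝ W]
    [AddCommGroup L] [Module ℝ L] [AddCommGroup Xi] [Module ℝ Xi]
    [AddCommGroup R] [Module ℝ R] [AddCommGroup T] [Module ℝ T]
    [AddCommGroup P] [Module ℝ P]
    (V0 Vp : Submodule ℝ V) (hV0p : V0 ≤ Vp)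
    (W0 : Submodule ℝ W)
    (L0 Lp : Submodule ℝ L) (hL0p : L0 ≤ Lp)
    (Xip : Submodule ℝ Xi)
    (J : V →ₗ[ℝ] W) (fd : V →ₗ[ℝ] W) (cd : L →ₗ[ℝ] W)
    (qd : Xi →ₗ[ℝ] V) (hd : Xi →ₗ[ℝ] L) (Hd : L →ₗ[ℝ] Xi)
    (gs : W →ₗ[ℝ] T) (sd : V →ₗ[ℝ] R) (kd : R →ₗ[ℝ] T)
    (rbd : V →ₗ[ℝ] V) (rbsd : R →ₗ[ℝ] W) (rbJd : L →ₗ[ℝ] V)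
    (qJd : Xi →ₗ[ℝ] P) (g : P →ₗ[ℝ] V)
    (h1 : ∀ v : V, fd v = J (rbd v) + rbsd (sd v))
    (h2 : ∀ x : Xi, fd (qd x) = cd (hd x))
    (h3 : ∀ v : V, kd (sd v) = gs (fd v))
    (h4 : ∀ μ ∈ Lp, hd (Hd μ) = μ)
    (h5 : ∀ a b : R, (∃ v ∈ Vp, a = sd v) → (∃ v ∈ Vp, b = sd v) →
      kd a = kd b → a = b)
    (h6 : ∀ x : Xi, rbd (qd x) = rbJd (hd x) + g (qJd x))
    (h7 : ∀ p : P, J (g p) = 0)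
    (m1 : ∀ x ∈ Xip, qd x ∈ Vp)
    (m2 : ∀ μ ∈ L0, Hd μ ∈ Xip)
    (m3 : ∀ v ∈ V0, rbd v ∈ V0)
    (m4 : ∀ μ ∈ L0, rbJd μ ∈ V0) :
    ∀ α ∈ W0, ∀ ψ ∈ V0, ∀ lam ∈ L0,
      α = fd ψ + cd lam → gs α = 0 →
      α = J (rbd ψ + rbJd lam) ∧ ∃ ξ ∈ V0, α = J ξ := by
  intro α hα ψ hψ lam hlam hform hgauge
  set x := Hd lam with hx
  have hhd : hd x = lam := h4 lam (hL0p hlam)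
  have hcd : cd lam = fd (qd x) := by rw [← hhd, ← h2]
  have hαf : α = fd (ψ + qd x) := by rw [map_add, hform, hcd]
  have hqVp : qd x ∈ Vp := m1 x (m2 lam hlam)
  have hsum : ψ + qd x ∈ Vp := Vp.add_mem (hV0p hψ) hqVp
  have hzero : sd (ψ + qd x) = 0 := by
    have h0 : (0 : V) ∈ Vp := Vp.zero_mem
    have := h5 (sd (ψ + qd x)) (sd 0) ⟨ψ + qd x, hsum, rfl⟩ ⟨0, h0, rfl⟩ ?_
    · simpa using this
    · rw [h3, h3, ← hαf, hgauge, map_zero, map_zero]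
  have key : α = J (rbd ψ + rbJd lam) := by
    simp [hαf, h1, hzero, h6, hhd, h7, map_add]
  exact ⟨key, rbd ψ + rbJd lam, V0.add_mem (m3 ψ hψ) (m4 lam hlam), key⟩
end

section
/- Anti-self-adjointness up to gauge of the Peierls causal Green function (operator-identity form of the paper's Lemma on (E)* = −E modulo gauge): Let V, W, P, Z be real vector spaces and let J : V → W, E₊ : W → V, E₋ : W → V, D₊ : W → V, D₋ : W → V, g⋆ : W → Z, p : Z → W, g : P → V, p' : V → P be linear maps satisfying J ∘ E₊ = id_W + p ∘ g⋆, J ∘ E₋ = id_W + p ∘ g⋆, D₊ ∘ J = id_V + g ∘ p', and D₋ ∘ J = id_V + g ∘ p'. Then, writing E = E₊ − E₋ and D = D₊ − D₋, the operator identity E = −D − D ∘ p ∘ g⋆ − g ∘ p' ∘ E holds. -/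
/-- Anti-self-adjointness up to gauge of the Peierls causal Green function, in
operator-identity form: if `J ∘ E₊ = id + p ∘ g⋆`, `J ∘ E₋ = id + p ∘ g⋆`,
`D₊ ∘ J = id + g ∘ p'` and `D₋ ∘ J = id + g ∘ p'`, then, writing `E = E₊ − E₋` and
`D = D₊ − D₋`, one has `E = − D − D ∘ p ∘ g⋆ − g ∘ p' ∘ E`. -/
theorem statement14 {V W P Z : Type*}
    [AddCommGroup V] [Module ℝ V] [AddCommGroup W] [Module ℝ W]
    [AddCommGroup P] [Module ℝ P] [AddCommGroup Z] [Module ℝ Z]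
    (J : V →ₗ[ℝ] W) (Ep Em Dp Dm : W →ₗ[ℝ] V)
    (gs : W →ₗ[ℝ] Z) (p : Z →ₗ[ℝ] W) (g : P →ₗ[ℝ] V) (p' : V →ₗ[ℝ] P)
    (hEp : ∀ w : W, J (Ep w) = w + p (gs w))
    (hEm : ∀ w : W, J (Em w) = w + p (gs w))
    (hDp : ∀ v : V, Dp (J v) = v + g (p' v))
    (hDm : ∀ v : V, Dm (J v) = v + g (p' v)) :
    ∀ w : W,
      (Ep - Em) w
        = - ((Dp - Dm) w) - (Dp - Dm) (p (gs w)) - g (p' ((Ep - Em) w)) := by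
  intro w
  have h1 := hDm (Ep w)
  have h2 := hDp (Em w)
  rw [hEp] at h1
  rw [hEm] at h2
  simp only [LinearMap.sub_apply, map_add, map_sub] at *
  linear_combination (norm := abel) h2 - h1
end

section
/- Antisymmetry of the Peierls bivector on gauge invariant dual densities (the paper's Lemma on the Peierls formula defining an antisymmetric bilinear form): Let V, W, Z, P be real vector spaces, B : V × W → ℝ and D' : P × Z → ℝ bilinear maps, and E : W → V, D : W → V, g : P → V, g⋆ : W → Z, p : Z → W, p' : V → P linear maps such that: (a) B(E w, w') = B(D w', w) for all w, w' ∈ W; (b) E = −D − D ∘ p ∘ g⋆ − g ∘ p' ∘ E; and (c) B(g ε, w) = D'(ε, g⋆ w) for all ε ∈ P and w ∈ W. Then for all α, β ∈ W with g⋆ α = 0 and g⋆ β = 0: B(E α, β) = −B(E β, α). -/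
/-- Antisymmetry of the Peierls bivector on gauge invariant dual densities: if
(a) `B (E w) w' = B (D w') w` (`D` is the adjoint of `E` w.r.t. `B`),
(b) `E = − D − D ∘ p ∘ g⋆ − g ∘ p' ∘ E` (anti-self-adjointness up to gauge), and
(c) `B (g ε) w = D' ε (g⋆ w)` (adjointness of the gauge generator),
then `B (E α) β = − B (E β) α` for all `α, β` with `g⋆ α = 0` and `g⋆ β = 0`. -/
theorem statement15 {V W Z P : Type*}
    [AddCommGroup V] [Module ℝ V] [AddCommGroup W] [Module ℝ W]
    [AddCommGroup Z] [Module ℝ Z] [AddCommGroup P] [Module ℝ P]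
    (B : V →ₗ[ℝ] W →ₗ[ℝ] ℝ) (D' : P →ₗ[ℝ] Z →ₗ[ℝ] ℝ)
    (E D : W →ₗ[ℝ] V) (g : P →ₗ[ℝ] V) (gs : W →ₗ[ℝ] Z)
    (p : Z →ₗ[ℝ] W) (p' : V →ₗ[ℝ] P)
    (ha : ∀ w w' : W, B (E w) w' = B (D w') w)
    (hb : ∀ w : W, E w = - D w - D (p (gs w)) - g (p' (E w)))
    (hc : ∀ (ε : P) (w : W), B (g ε) w = D' ε (gs w)) :
    ∀ α β : W, gs α = 0 → gs β = 0 → B (E α) β = - B (E β) α := by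
  intro α β hα hβ
  have := hb α
  rw [hα] at this
  simp only [map_zero] at this
  rw [this]
  simp only [map_sub, map_neg, LinearMap.sub_apply, LinearMap.neg_apply]
  rw [hc, hβ, ← ha]
  simp
end

section
/- Nonemptiness and basic properties of the strict convex dual (parts (i) and (ii) of the paper's Proposition on convex cones): Let V be a finite-dimensional real inner product space and C ⊆ V a convex cone. Then the strict convex dual C^⊛ is an open convex cone, and C^⊛ is nonempty if and only if C contains no affine line. -/
open scoped RealInnerProductSpace

/-- The strict convex dual of a subset `C` of a real inner product space:
all vectors pairing strictly positively with every nonzero element of `closure C`. -/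
def strictDual {V : Type*} [NormedAddCommGroup V] [InnerProductSpace ℝ V]
    (C : Set V) : Set V :=
  {u : V | ∀ v ∈ closure C, v ≠ 0 → 0 < ⟪u, v⟫}

/-!
Both conditions in the equivalence are equivalent to `closure C` being salient (containing no
pair `v, -v` with `v ≠ 0`). If `v` and `-v` lie in `closure C`, then a point `c` of the interior
of `C` relative to its span satisfies `c + w ∈ C` for all `w ∈ closure C`, so `C` contains the
line `c + ℝ v`; conversely a line `a + ℝ b` in `C` puts `±b` in `closure C`, since
`t⁻¹ • (a ± t • b) → ±b`. If `closure C` is salient, its bidual is itself, so no nonzero vector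
is orthogonal to the dual cone; the dual cone therefore spans `V`, has an interior point, and
every interior point of it lies in `C^⊛`. Openness comes from writing `C^⊛` as the set of `u`
positive on the compact set `closure C ∩ sphere 0 1`.
-/

open Set Filter Topology

namespace ConvexCone

variable {E : Type*} [NormedAddCommGroup E] [NormedSpace ℝ E]

def ofConvex {C : Set E} (hconv : Convex ℝ C)
    (hcone : ∀ c ∈ C, ∀ t : ℝ, 0 < t → t • c ∈ C) : ConvexCone ℝ E where
  carrier := C
  smul_mem' _ ht _ hc := hcone _ hc _ ht
  add_mem' x hx y hy := by
    have h := hcone _ (hconv hx hy (by norm_num : (0 : ℝ) ≤ 2⁻¹) (by norm_num : (0 : ℝ) ≤ 2⁻¹)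
      (by norm_num)) 2 two_pos
    rwa [smul_add, smul_smul, smul_smul, mul_inv_cancel₀ two_ne_zero, one_smul, one_smul] at h

variable (K : ConvexCone ℝ E)

theorem add_mem_of_mem_interior_of_mem_closure {c w : E} (hc : c ∈ interior (K : Set E))
    (hw : w ∈ closure (K : Set E)) : c + w ∈ K := by
  have hmid := K.convex.combo_interior_closure_mem_interior hc hw
    (by norm_num : (0 : ℝ) < 2⁻¹) (by norm_num : (0 : ℝ) ≤ 2⁻¹) (by norm_num)
  have h := K.smul_mem two_pos (interior_subset hmid)
  rwa [smul_add, smul_smul, smul_smul, mul_inv_cancel₀ two_ne_zero, one_smul, one_smul] at h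

theorem interior_nonempty_of_span_eq_top [FiniteDimensional ℝ E] (hK : (K : Set E).Nonempty)
    (hspan : Submodule.span ℝ (K : Set E) = ⊤) : (interior (K : Set E)).Nonempty := by
  rw [K.convex.interior_nonempty_iff_affineSpan_eq_top,
    AffineSubspace.affineSpan_eq_top_iff_vectorSpan_eq_top_of_nonempty ℝ E E hK, eq_top_iff,
    ← hspan, Submodule.span_le]
  intro x hx
  simpa [two_smul] using vsub_mem_vectorSpan ℝ (K.smul_mem two_pos hx) hx

theorem exists_forall_add_mem_of_mem_closure [FiniteDimensional ℝ E]
    (hK : (K : Set E).Nonempty) : ∃ c ∈ K, ∀ w ∈ closure (K : Set E), c + w ∈ K := by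
  -- `c` is an interior point of `K` inside its linear span `W`.
  set W := Submodule.span ℝ (K : Set E)
  set K' := K.comap W.subtype
  have hK' : (K' : Set W).Nonempty :=
    let ⟨c, hc⟩ := hK; ⟨⟨c, Submodule.subset_span hc⟩, hc⟩
  obtain ⟨c, hc⟩ := K'.interior_nonempty_of_span_eq_top hK' Submodule.span_span_coe_preimage
  refine ⟨c, (interior_subset hc : c ∈ K'), fun w hw => ?_⟩
  have hwW : w ∈ W := closure_minimal Submodule.subset_span W.closed_of_finiteDimensional hw
  have hw' : (⟨w, hwW⟩ : W) ∈ closure (K' : Set W) := by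
    rwa [IsEmbedding.subtypeVal.closure_eq_preimage_closure_image, coe_comap, W.coe_subtype,
      image_preimage_eq_of_subset (by rw [Subtype.range_coe]; exact Submodule.subset_span)]
  exact K'.add_mem_of_mem_interior_of_mem_closure hc hw'

theorem mem_closure_of_forall_add_smul_mem {a b : E} (h : ∀ t : ℝ, 0 < t → a + t • b ∈ K) :
    b ∈ closure (K : Set E) := by
  have hlim : Tendsto (fun t : ℝ => t⁻¹ • a + b) atTop (𝓝 b) := by
    simpa using ((tendsto_inv_atTop_zero (𝕜 := ℝ)).smul_const a).add_const b
  refine mem_closure_of_tendsto hlim ?_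
  filter_upwards [eventually_gt_atTop 0] with t ht
  simpa [smul_add, smul_smul, inv_mul_cancel₀ ht.ne'] using K.smul_mem (inv_pos.2 ht) (h t ht)

theorem exists_line_iff_flat_closure [FiniteDimensional ℝ E] :
    (∃ a b : E, b ≠ 0 ∧ ∀ t : ℝ, a + t • b ∈ K) ↔ K.closure.Flat := by
  constructor
  · rintro ⟨a, b, hb, hline⟩
    exact ⟨b, K.mem_closure_of_forall_add_smul_mem fun t _ => hline t, hb,
      K.mem_closure_of_forall_add_smul_mem fun t _ => by simpa using hline (-t)⟩
  · rintro ⟨v, hv, hv0, hv'⟩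
    obtain ⟨c, hc, hadd⟩ :=
      K.exists_forall_add_mem_of_mem_closure (closure_nonempty_iff.1 ⟨v, hv⟩)
    refine ⟨c, v, hv0, fun t => ?_⟩
    rcases lt_trichotomy t 0 with ht | rfl | ht
    · simpa using hadd _ (K.closure.smul_mem (neg_pos.2 ht) hv')
    · simpa using hc
    · exact hadd _ (K.closure.smul_mem ht hv)

end ConvexCone

section StrictDual

variable {E : Type*} [NormedAddCommGroup E] [InnerProductSpace ℝ E]

theorem convex_strictDual (C : Set E) : Convex ℝ (strictDual C) := by
  refine convex_iff_forall_pos.2 fun u hu u' hu' a b ha hb _ v hv hv0 => ?_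
  rw [inner_add_left, real_inner_smul_left, real_inner_smul_left]
  exact add_pos (mul_pos ha (hu v hv hv0)) (mul_pos hb (hu' v hv hv0))

theorem smul_mem_strictDual {C : Set E} {u : E} (hu : u ∈ strictDual C) {t : ℝ} (ht : 0 < t) :
    t • u ∈ strictDual C := fun v hv hv0 => by
  rw [real_inner_smul_left]
  exact mul_pos ht (hu v hv hv0)

theorem isOpen_setOf_forall_inner_pos {S : Set E} (hS : IsCompact S) :
    IsOpen {u : E | ∀ w ∈ S, 0 < ⟪u, w⟫} := by
  refine isOpen_iff_mem_nhds.2 fun u hu => hS.eventually_forall_of_forall_eventually fun w hw => ?_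
  exact continuous_inner.continuousAt.eventually (eventually_gt_nhds (hu w hw))

theorem inner_pos_of_mem_interior_innerDual [CompleteSpace E] {s : Set E} {u v : E}
    (hu : u ∈ interior (ProperCone.innerDual s : Set E)) (hv : v ∈ s) (hv0 : v ≠ 0) :
    0 < ⟪v, u⟫ := by
  have hlim : Tendsto (fun t : ℝ => u - t • v) (𝓝[>] 0) (𝓝 u) := by
    have : Continuous fun t : ℝ => u - t • v := by fun_prop
    simpa using (this.tendsto 0).mono_left nhdsWithin_le_nhds
  obtain ⟨t, hmem, ht⟩ :=
    ((hlim.eventually (mem_interior_iff_mem_nhds.1 hu)).and self_mem_nhdsWithin).exists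
  have h := ProperCone.mem_innerDual.1 hmem hv
  rw [inner_sub_right, real_inner_smul_right] at h
  nlinarith [mul_pos (show (0 : ℝ) < t from ht) (real_inner_self_pos.2 hv0)]

namespace ProperCone

theorem span_innerDual_eq_top [FiniteDimensional ℝ E] (P : ProperCone ℝ E)
    (hP : (P : ConvexCone ℝ E).Salient) :
    Submodule.span ℝ (innerDual (P : Set E) : Set E) = ⊤ := by
  rw [← Submodule.orthogonal_eq_bot_iff, Submodule.eq_bot_iff]
  intro w hw
  have hperp : ∀ x ∈ innerDual (P : Set E), ⟪x, w⟫ = 0 := fun x hx =>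
    Submodule.inner_right_of_mem_orthogonal (Submodule.subset_span hx) hw
  by_contra hw0
  refine hP w (?_ : w ∈ P) hw0 (?_ : -w ∈ P) <;>
    rw [← P.innerDual_innerDual, mem_innerDual] <;> intro x hx
  · exact (hperp x hx).ge
  · rw [inner_neg_right, hperp x hx, neg_zero]

theorem exists_forall_inner_pos [FiniteDimensional ℝ E] (P : ProperCone ℝ E)
    (hP : (P : ConvexCone ℝ E).Salient) : ∃ u : E, ∀ v ∈ P, v ≠ 0 → 0 < ⟪v, u⟫ := by
  set Q := innerDual (P : Set E)
  obtain ⟨u, hu⟩ := (Q : ConvexCone ℝ E).interior_nonempty_of_span_eq_top ⟨0, Q.zero_mem⟩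
    (P.span_innerDual_eq_top hP)
  exact ⟨u, fun v hv hv0 => inner_pos_of_mem_interior_innerDual hu hv hv0⟩

end ProperCone

namespace ConvexCone

variable (K : ConvexCone ℝ E)

theorem strictDual_eq :
    strictDual (K : Set E) =
      {u : E | ∀ w ∈ closure (K : Set E) ∩ Metric.sphere 0 1, 0 < ⟪u, w⟫} := by
  ext u
  refine ⟨fun hu w hw => hu w hw.1 (ne_zero_of_mem_unit_sphere ⟨w, hw.2⟩), fun hu v hv hv0 => ?_⟩
  have hnorm : 0 < ‖v‖ := norm_pos_iff.2 hv0
  have h := hu (‖v‖⁻¹ • v)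
    ⟨K.closure.smul_mem (inv_pos.2 hnorm) hv, by simp [norm_smul, hnorm.ne']⟩
  rw [real_inner_smul_right] at h
  exact pos_of_mul_pos_right h (inv_pos.2 hnorm).le

theorem isOpen_strictDual [FiniteDimensional ℝ E] : IsOpen (strictDual (K : Set E)) := by
  rw [K.strictDual_eq]
  exact isOpen_setOf_forall_inner_pos ((isCompact_sphere (0 : E) 1).inter_left isClosed_closure)

theorem strictDual_nonempty_iff [FiniteDimensional ℝ E] :
    (strictDual (K : Set E)).Nonempty ↔ K.closure.Salient := by
  constructor
  · rintro ⟨u, hu⟩ v hv hv0 hv'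
    have h := hu (-v) hv' (neg_ne_zero.2 hv0)
    rw [inner_neg_right] at h
    linarith [hu v hv hv0]
  · intro hsal
    rcases (K : Set E).eq_empty_or_nonempty with hK | hK
    · exact ⟨0, by simp [strictDual, hK]⟩
    let P : ProperCone ℝ E := ⟨K.closure.toPointedCone
      (.of_nonempty_of_isClosed (closure_nonempty_iff.2 hK) isClosed_closure), isClosed_closure⟩
    obtain ⟨u, hu⟩ := P.exists_forall_inner_pos hsal
    exact ⟨u, fun v hv hv0 => real_inner_comm u v ▸ hu v hv hv0⟩

end ConvexCone

end StrictDual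

/-- Basic properties of the strict convex dual of a convex cone `C` in a
finite-dimensional real inner product space: `C^⊛` is an open convex cone, and it is
nonempty if and only if `C` contains no affine line. -/
theorem statement17 {V : Type*} [NormedAddCommGroup V] [InnerProductSpace ℝ V]
    [FiniteDimensional ℝ V]
    (C : Set V) (hconv : Convex ℝ C)
    (hcone : ∀ c ∈ C, ∀ t : ℝ, 0 < t → t • c ∈ C) :
    IsOpen (strictDual C) ∧
    Convex ℝ (strictDual C) ∧
    (∀ u ∈ strictDual C, ∀ t : ℝ, 0 < t → t • u ∈ strictDual C) ∧
    ((strictDual C).Nonempty ↔ ¬ ∃ a b : V, b ≠ 0 ∧ ∀ t : ℝ, a + t • b ∈ C) := by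
  set K := ConvexCone.ofConvex hconv hcone
  refine ⟨K.isOpen_strictDual, convex_strictDual C, fun u hu t ht => smul_mem_strictDual hu ht, ?_⟩
  have hline : (∃ a b : V, b ≠ 0 ∧ ∀ t : ℝ, a + t • b ∈ C) ↔ K.closure.Flat :=
    K.exists_line_iff_flat_closure
  rw [hline, ← ConvexCone.salient_iff_not_flat]
  exact K.strictDual_nonempty_iff
end

section
/- Double strict convex dual of an open salient cone (part (iii) of the paper's Proposition on convex cones): Let V be a finite-dimensional real inner product space and C ⊆ V a nonempty open convex cone with closure(C) ∩ (−closure(C)) = {0}. Then C^⊛⊛ = C, where C^⊛ denotes the strict convex dual. -/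
/-!
A point `u` of the open cone `C` pairs positively with every nonzero `v ∈ closure C^⊛`: such a
`v` is nonnegative on `C`, hence strictly positive at the interior point `u`.

Conversely, salience of `closure C` means, by biduality of closed cones, that its (weak) inner
dual `D` spans `V`, so in finite dimension `D` has an interior point `e`; such an `e` lies in
`C^⊛`, and `w + t • e → w` shows that `C^⊛` is dense in `D`. If `u ∉ C`, Hahn–Banach separation
of `u` from the open cone `C` gives a nonzero `w ∈ D` with `⟪u, w⟫ ≤ 0`, so `u ∉ C^⊛⊛`.
-/

open scoped RealInnerProductSpace

open Filter Topology ProperCone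

lemma ConvexCone.coe_hull_of_convex_of_smul_mem {𝕜 M : Type*} [Field 𝕜] [LinearOrder 𝕜]
    [IsStrictOrderedRing 𝕜] [AddCommGroup M] [Module 𝕜 M] {s : Set M} (hs : Convex 𝕜 s)
    (hsmul : ∀ x ∈ s, ∀ r : 𝕜, 0 < r → r • x ∈ s) : (hull 𝕜 s : Set M) = s := by
  refine subset_antisymm ?_ subset_hull
  rw [coe_hull_of_convex hs]
  rintro _ ⟨r, hr, y, hy, rfl⟩
  exact hsmul y hy r hr

lemma tendsto_add_smul_nhdsGT_zero {E : Type*} [AddCommGroup E] [TopologicalSpace E]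
    [Module ℝ E] [ContinuousAdd E] [ContinuousSMul ℝ E] (x y : E) :
    Tendsto (fun t : ℝ => x + t • y) (𝓝[>] 0) (𝓝 x) := by
  have hcont : Continuous fun t : ℝ => x + t • y := by fun_prop
  simpa using (hcont.tendsto 0).mono_left nhdsWithin_le_nhds

section

variable {V : Type*} [NormedAddCommGroup V] [InnerProductSpace ℝ V]

lemma inner_pos_of_mem_interior {S : Set V} {u v : V} (hu : u ∈ interior S) (hv : v ≠ 0)
    (hS : ∀ w ∈ S, 0 ≤ ⟪w, v⟫) : 0 < ⟪u, v⟫ := by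
  obtain ⟨t, htS, ht⟩ := (((tendsto_add_smul_nhdsGT_zero u (-v)).eventually
    (mem_interior_iff_mem_nhds.1 hu)).and self_mem_nhdsWithin).exists
  have hnonneg := hS _ htS
  rw [inner_add_left, real_inner_smul_left, inner_neg_left, real_inner_self_eq_norm_sq]
    at hnonneg
  have ht : 0 < t := ht
  have : 0 < t * ‖v‖ ^ 2 := by have := norm_pos_iff.2 hv; positivity
  linarith

variable [CompleteSpace V]

lemma ProperCone.innerDual_closure (S : Set V) : innerDual (closure S) = innerDual S := by
  refine le_antisymm (innerDual_le_innerDual subset_closure) fun y hy => mem_innerDual.2 ?_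
  have hclosed : IsClosed {x : V | 0 ≤ ⟪x, y⟫} := isClosed_le continuous_const (by fun_prop)
  exact hclosed.closure_subset_iff.2 (mem_innerDual.1 hy)

lemma closure_strictDual_subset_innerDual (S : Set V) :
    closure (strictDual S) ⊆ innerDual S := by
  refine (innerDual S).isClosed.closure_subset_iff.2 fun u hu =>
    mem_innerDual.2 fun x hx => ?_
  rcases eq_or_ne x 0 with rfl | hx0
  · simp
  · exact real_inner_comm u x ▸ (hu x (subset_closure hx) hx0).le

lemma interior_innerDual_subset_strictDual (S : Set V) :
    interior (innerDual S : Set V) ⊆ strictDual S := by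
  rw [← innerDual_closure]
  exact fun e he v hv hv0 => inner_pos_of_mem_interior he hv0 fun w hw =>
    real_inner_comm v w ▸ mem_innerDual.1 hw hv

lemma innerDual_subset_closure_strictDual {S : Set V} {e : V} (he : e ∈ strictDual S) :
    (innerDual S : Set V) ⊆ closure (strictDual S) := by
  rw [← innerDual_closure]
  intro w hw
  refine mem_closure_of_tendsto (tendsto_add_smul_nhdsGT_zero w e)
    (eventually_nhdsWithin_of_forall fun t (ht : 0 < t) v hv hv0 => ?_)
  rw [inner_add_left, real_inner_smul_left, real_inner_comm]
  exact add_pos_of_nonneg_of_pos (mem_innerDual.1 hw hv) (mul_pos ht (he v hv hv0))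

lemma subset_strictDual_strictDual_of_isOpen {S : Set V} (hS : IsOpen S) :
    S ⊆ strictDual (strictDual S) := fun _ hu _ hv hv0 =>
  inner_pos_of_mem_interior (hS.interior_eq.ge hu) hv0 fun _ hw =>
    mem_innerDual.1 (closure_strictDual_subset_innerDual S hv) hw

lemma ConvexCone.exists_innerDual_of_notMem {K : ConvexCone ℝ V} (hne : (K : Set V).Nonempty)
    (hK : IsOpen (K : Set V)) {u : V} (hu : u ∉ K) :
    ∃ w ∈ innerDual (K : Set V), w ≠ 0 ∧ ⟪u, w⟫ ≤ 0 := by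
  obtain ⟨f, hf⟩ := geometric_hahn_banach_open_point K.convex hK hu
  have hfu : 0 ≤ f u := by
    have h0 : (0 : V) ∈ K.closure :=
      Pointed.of_nonempty_of_isClosed (hne.mono subset_closure) isClosed_closure
    simpa using (isClosed_le f.continuous continuous_const).closure_subset_iff.2
      (fun a ha => (hf a ha).le) h0
  -- `f < f u` on the cone `K` forces `f ≤ 0` there, by scaling
  have hfK : ∀ a ∈ K, f a ≤ 0 := by
    intro a ha
    by_contra! hfa
    have := hf _ (K.smul_mem (div_pos (add_pos_of_nonneg_of_pos hfu one_pos) hfa) ha)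
    rw [map_smul, smul_eq_mul, div_mul_cancel₀ _ hfa.ne'] at this
    linarith
  have hf0 : f ≠ 0 := by
    obtain ⟨c, hc⟩ := hne
    rintro rfl
    exact (hf c hc).false
  set z := (InnerProductSpace.toDual ℝ V).symm f
  have hz : ∀ x, ⟪x, -z⟫ = -f x := fun x => by
    rw [inner_neg_right, real_inner_comm, InnerProductSpace.toDual_symm_apply]
  refine ⟨-z, mem_innerDual.2 fun x hx => ?_, ?_, ?_⟩
  · rw [hz]
    linarith [hfK x hx]
  · simpa [z] using hf0
  · rw [hz]
    linarith

lemma ProperCone.orthogonal_span_innerDual_eq_bot (P : ProperCone ℝ V)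
    (hP : (P : ConvexCone ℝ V).Salient) :
    (Submodule.span ℝ (innerDual (P : Set V) : Set V))ᗮ = ⊥ := by
  refine eq_bot_iff.2 fun w hw => ?_
  have hperp : ∀ x ∈ innerDual (P : Set V), ⟪x, w⟫ = 0 := fun x hx =>
    (Submodule.mem_orthogonal _ w).1 hw x (Submodule.subset_span hx)
  have hwP : w ∈ P := by
    rw [← innerDual_innerDual P]
    exact mem_innerDual.2 fun x hx => (hperp x hx).ge
  have hnwP : -w ∈ P := by
    rw [← innerDual_innerDual P]
    exact mem_innerDual.2 fun x hx => by rw [inner_neg_right, hperp x hx, neg_zero]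
  by_contra hw0
  exact hP w hwP hw0 hnwP

lemma ProperCone.interior_innerDual_nonempty [FiniteDimensional ℝ V] (P : ProperCone ℝ V)
    (hP : (P : ConvexCone ℝ V).Salient) : (interior (innerDual (P : Set V) : Set V)).Nonempty := by
  set D := innerDual (P : Set V)
  rw [D.convex.interior_nonempty_iff_affineSpan_eq_top,
    AffineSubspace.affineSpan_eq_top_iff_vectorSpan_eq_top_of_nonempty ℝ V V D.nonempty,
    eq_top_iff, ← Submodule.orthogonal_eq_bot_iff.1 (P.orthogonal_span_innerDual_eq_bot hP)]
  exact Submodule.span_le.2 fun x hx => by simpa using vsub_mem_vectorSpan ℝ hx (zero_mem D)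

theorem ConvexCone.strictDual_strictDual_eq [FiniteDimensional ℝ V] (K : ConvexCone ℝ V)
    (hne : (K : Set V).Nonempty) (hK : IsOpen (K : Set V)) (hsal : K.closure.Salient) :
    strictDual (strictDual (K : Set V)) = K := by
  refine subset_antisymm (fun u hu => ?_) (subset_strictDual_strictDual_of_isOpen hK)
  let P : ProperCone ℝ V :=
    ⟨K.closure.toPointedCone (.of_nonempty_of_isClosed (hne.mono subset_closure)
      isClosed_closure), isClosed_closure⟩
  obtain ⟨e, he⟩ := P.interior_innerDual_nonempty hsal
  rw [show (P : Set V) = closure K from rfl, innerDual_closure] at he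
  by_contra huK
  obtain ⟨w, hwK, hw0, huw⟩ := K.exists_innerDual_of_notMem hne hK huK
  exact (hu w (innerDual_subset_closure_strictDual
    (interior_innerDual_subset_strictDual _ he) hwK) hw0).not_ge huw

end

/-- Double strict convex dual of an open salient cone: for a nonempty open convex
cone `C` in a finite-dimensional real inner product space with
`closure C ∩ (−closure C) = {0}`, one has `C^⊛⊛ = C`. -/
theorem statement18 {V : Type*} [NormedAddCommGroup V] [InnerProductSpace ℝ V]
    [FiniteDimensional ℝ V]
    (C : Set V) (hne : C.Nonempty) (hopen : IsOpen C) (hconv : Convex ℝ C)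
    (hcone : ∀ c ∈ C, ∀ t : ℝ, 0 < t → t • c ∈ C)
    (hsal : closure C ∩ (-closure C) = {0}) :
    strictDual (strictDual C) = C := by
  have hC := ConvexCone.coe_hull_of_convex_of_smul_mem hconv hcone
  rw [← hC] at hne hopen hsal ⊢
  exact ConvexCone.strictDual_strictDual_eq _ hne hopen fun x hx hx0 hnx =>
    hx0 (hsal.subset ⟨hx, hnx⟩)
end

section
/- Strict convex duals of intersections and sums of proper cones (part (v) of the paper's Proposition on convex cones, strict-dual version): Let V be a finite-dimensional real inner product space and C₁, C₂ ⊆ V nonempty open convex cones, each satisfying closure(Cᵢ) ∩ (−closure(Cᵢ)) = {0}, and with C₁ ∩ C₂ nonempty. Then (C₁ ∩ C₂)^⊛ = C₁^⊛ + C₂^⊛, where + denotes the Minkowski sum, and (C₁ + C₂)^⊛ = C₁^⊛ ∩ C₂^⊛. -/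
open scoped RealInnerProductSpace Pointwise

/-!
For a cone `C` in finite dimension, `C^⊛` is the interior of the closed dual cone `C^*`: a
functional positive on the compact set `closure C ∩ sphere 0 1` stays positive there under small
perturbations. By the bipolar theorem `C^** = closure C`, so salience of `closure C` forces `C^*`
to be full-dimensional. The second identity is then `(C₁ + C₂)^* = C₁^* ∩ C₂^*` passed to interiors.
For the first, `closure (C₁ ∩ C₂) = closure C₁ ∩ closure C₂` (the cones are open and meet), the
bipolar theorem gives `(closure C₁ ∩ closure C₂)^* = closure (C₁^* + C₂^*)`, and for the convex
cones `Cᵢ^*` with nonempty interior, taking the closure does not change the interior and the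
interior of the sum is the sum of the interiors.
-/

open Set Filter Topology ProperCone

section RealVectorSpace

variable {E : Type*} [AddCommGroup E] [Module ℝ E]

lemma Convex.exists_convexCone_coe_eq {s : Set E} (hs : Convex ℝ s)
    (hcone : ∀ c ∈ s, ∀ t : ℝ, 0 < t → t • c ∈ s) : ∃ K : ConvexCone ℝ E, (K : Set E) = s :=
  ⟨{ carrier := s
     smul_mem' := fun t ht x hx => hcone x hx t ht
     add_mem' := fun x hx y hy => by
       have hmid : (1 / 2 : ℝ) • x + (1 / 2 : ℝ) • y ∈ s :=
         hs hx hy (by norm_num) (by norm_num) (by norm_num)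
       convert hcone _ hmid 2 two_pos using 1
       module }, rfl⟩

variable [TopologicalSpace E]

lemma exists_pos_add_smul_mem_of_mem_interior [ContinuousAdd E] [ContinuousSMul ℝ E]
    {s : Set E} {x : E} (hx : x ∈ interior s) (v : E) : ∃ t : ℝ, 0 < t ∧ x + t • v ∈ s := by
  have hlim : Tendsto (fun t : ℝ => x + t • v) (𝓝 0) (𝓝 x) := by
    have hcont : Continuous fun t : ℝ => x + t • v := by fun_prop
    simpa using hcont.tendsto 0
  exact (hlim.eventually (mem_interior_iff_mem_nhds.1 hx)).exists_gt

lemma Convex.closure_inter_eq_inter_closure [IsTopologicalAddGroup E] [ContinuousSMul ℝ E]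
    {s t : Set E} (hs : Convex ℝ s) (ht : Convex ℝ t) (hst : (interior s ∩ interior t).Nonempty) :
    closure (s ∩ t) = closure s ∩ closure t := by
  refine (closure_inter_subset_inter_closure s t).antisymm fun x ⟨hxs, hxt⟩ => ?_
  obtain ⟨p, hps, hpt⟩ := hst
  have hseg : openSegment ℝ p x ⊆ s ∩ t := fun y hy =>
    ⟨interior_subset (hs.openSegment_interior_closure_subset_interior hps hxs hy),
      interior_subset (ht.openSegment_interior_closure_subset_interior hpt hxt hy)⟩
  exact closure_mono hseg (segment_subset_closure_openSegment (right_mem_segment ℝ p x))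

namespace ConvexCone

variable {C : ConvexCone ℝ E}

lemma zero_mem_closure [ContinuousAdd E] [ContinuousSMul ℝ E] (hC : (C : Set E).Nonempty) :
    (0 : E) ∈ closure (C : Set E) := by
  have hpointed : C.closure.Pointed :=
    .of_nonempty_of_isClosed (by simpa [coe_closure] using hC.closure) (by simp [coe_closure])
  simpa [Pointed, ← SetLike.mem_coe, coe_closure] using hpointed

lemma add_mem_interior [IsTopologicalAddGroup E] {a p : E} (ha : a ∈ C)
    (hp : p ∈ interior (C : Set E)) : a + p ∈ interior (C : Set E) := by
  have hsub : {a} + interior (C : Set E) ⊆ C := by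
    rintro _ ⟨a', rfl, q, hq, rfl⟩
    exact C.add_mem ha (interior_subset hq)
  exact interior_maximal hsub isOpen_interior.add_left (add_mem_add rfl hp)

lemma smul_mem_interior [ContinuousConstSMul ℝ E] {c : ℝ} (hc : 0 < c) {p : E}
    (hp : p ∈ interior (C : Set E)) : c • p ∈ interior (C : Set E) := by
  have hsub : c • interior (C : Set E) ⊆ C := by
    rintro _ ⟨q, hq, rfl⟩
    exact C.smul_mem hc (interior_subset hq)
  exact interior_maximal hsub (isOpen_interior.smul₀ hc.ne') (smul_mem_smul_set hp)

lemma interior_add [IsTopologicalAddGroup E] [ContinuousSMul ℝ E] (C₁ C₂ : ConvexCone ℝ E)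
    (h₁ : (interior (C₁ : Set E)).Nonempty) (h₂ : (interior (C₂ : Set E)).Nonempty) :
    interior ((C₁ : Set E) + (C₂ : Set E)) = interior (C₁ : Set E) + interior (C₂ : Set E) := by
  refine subset_antisymm (fun x hx => ?_)
    (interior_maximal (add_subset_add interior_subset interior_subset) isOpen_interior.add_left)
  obtain ⟨p₁, hp₁⟩ := h₁
  obtain ⟨p₂, hp₂⟩ := h₂
  -- push `x` into `C₁ + C₂` along `-(p₁ + p₂)`, then hand `t • pᵢ` back to each summand
  obtain ⟨t, ht, a, ha, b, hb, hab⟩ := exists_pos_add_smul_mem_of_mem_interior hx (-(p₁ + p₂))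
  refine ⟨a + t • p₁, add_mem_interior ha (smul_mem_interior ht hp₁),
    b + t • p₂, add_mem_interior hb (smul_mem_interior ht hp₂), ?_⟩
  linear_combination (norm := module) hab

end ConvexCone

end RealVectorSpace

section InnerProductSpace

variable {V : Type*} [NormedAddCommGroup V] [InnerProductSpace ℝ V]

lemma Convex.interior_nonempty_of_span_eq_top [FiniteDimensional ℝ V] {s : Set V}
    (hs : Convex ℝ s) (h0 : (0 : V) ∈ s) (hspan : Submodule.span ℝ s = ⊤) :
    (interior s).Nonempty := by
  refine hs.interior_nonempty_iff_affineSpan_eq_top.mpr ?_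
  rw [AffineSubspace.affineSpan_eq_top_iff_vectorSpan_eq_top_of_nonempty ℝ V V ⟨0, h0⟩,
    eq_top_iff, ← hspan]
  exact Submodule.span_le.mpr fun x hx => by simpa using vsub_mem_vectorSpan ℝ hx h0

namespace ProperCone

variable [CompleteSpace V]

lemma innerDual_closure_s19 (s : Set V) : innerDual (closure s) = innerDual s := by
  refine le_antisymm (innerDual_le_innerDual subset_closure) fun y hy => mem_innerDual.2 ?_
  have hclosed : IsClosed {x : V | 0 ≤ ⟪x, y⟫} :=
    isClosed_le continuous_const (continuous_id.inner continuous_const)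
  exact fun x hx => closure_minimal (fun x' hx' => mem_innerDual.1 hy hx') hclosed hx

lemma innerDual_add {s t : Set V} (hs : (0 : V) ∈ closure s) (ht : (0 : V) ∈ closure t) :
    innerDual (s + t) = innerDual s ⊓ innerDual t := by
  refine le_antisymm (le_inf ?_ ?_) fun y hy => ?_
  · intro y hy x hx
    rw [← innerDual_closure_s19] at hy
    simpa using hy (map_mem_closure₂ continuous_add (subset_closure hx) ht
      fun a ha b hb => add_mem_add ha hb)
  · intro y hy x hx
    rw [← innerDual_closure_s19] at hy
    simpa using hy (map_mem_closure₂ continuous_add hs (subset_closure hx)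
      fun a ha b hb => add_mem_add ha hb)
  · refine mem_innerDual.2 ?_
    rintro _ ⟨a, ha, b, hb, rfl⟩
    rw [inner_add_left]
    exact add_nonneg (mem_innerDual.1 hy.1 ha) (mem_innerDual.1 hy.2 hb)

end ProperCone

namespace ConvexCone

variable [CompleteSpace V]

lemma innerDual_innerDual (C : ConvexCone ℝ V) (hC : (C : Set V).Nonempty) :
    (innerDual (innerDual (C : Set V) : Set V) : Set V) = closure (C : Set V) := by
  lift C.closure to ProperCone ℝ V
    using ⟨by simpa [coe_closure] using hC.closure, by simp [coe_closure]⟩ with P hP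
  rw [← innerDual_closure_s19 (C : Set V), ← coe_closure, ← hP]
  exact congrArg SetLike.coe (ProperCone.innerDual_innerDual P)

lemma innerDual_closure_inter_closure (C₁ C₂ : ConvexCone ℝ V) (h₁ : (C₁ : Set V).Nonempty)
    (h₂ : (C₂ : Set V).Nonempty) :
    (innerDual (closure (C₁ : Set V) ∩ closure (C₂ : Set V)) : Set V) =
      closure ((innerDual (C₁ : Set V) : Set V) + (innerDual (C₂ : Set V) : Set V)) := by
  set D : PointedCone ℝ V :=
    (innerDual (C₁ : Set V) : PointedCone ℝ V) ⊔ innerDual (C₂ : Set V)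
  have hD : (D : Set V) = (innerDual (C₁ : Set V) : Set V) + innerDual (C₂ : Set V) :=
    Submodule.coe_sup _ _
  have hdual :
      (innerDual (D : Set V) : Set V) = closure (C₁ : Set V) ∩ closure (C₂ : Set V) := by
    rw [hD, ProperCone.innerDual_add (subset_closure (zero_mem _)) (subset_closure (zero_mem _)),
      ← C₁.innerDual_innerDual h₁, ← C₂.innerDual_innerDual h₂]
    rfl
  rw [← hdual, ← hD]
  exact innerDual_innerDual (D : ConvexCone ℝ V) ⟨0, D.zero_mem⟩

variable [FiniteDimensional ℝ V]

lemma interior_innerDual_nonempty (C : ConvexCone ℝ V) (hC : (C : Set V).Nonempty)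
    (hsal : closure (C : Set V) ∩ -closure (C : Set V) = {0}) :
    (interior (innerDual (C : Set V) : Set V)).Nonempty := by
  by_contra hempty
  obtain ⟨w, hw, hw0⟩ : ∃ w ∈ (Submodule.span ℝ (innerDual (C : Set V) : Set V))ᗮ, w ≠ 0 := by
    refine Submodule.exists_mem_ne_zero_of_ne_bot fun hbot => hempty ?_
    exact (innerDual _).convex.interior_nonempty_of_span_eq_top (innerDual _).zero_mem
      (Submodule.orthogonal_eq_bot_iff.mp hbot)
  have hperp : ∀ u ∈ innerDual (C : Set V), ⟪u, w⟫ = 0 := fun u hu =>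
    (Submodule.mem_orthogonal _ _).mp hw u (Submodule.subset_span hu)
  have hw₁ : w ∈ closure (C : Set V) := by
    rw [← C.innerDual_innerDual hC]
    exact mem_innerDual.2 fun u hu => (hperp u hu).ge
  have hw₂ : -w ∈ closure (C : Set V) := by
    rw [← C.innerDual_innerDual hC]
    exact mem_innerDual.2 fun u hu => by rw [inner_neg_right, hperp u hu, neg_zero]
  exact hw0 (hsal.subset ⟨hw₁, by simpa using hw₂⟩)

lemma strictDual_eq_interior_innerDual (C : ConvexCone ℝ V) :
    strictDual (C : Set V) = interior (innerDual (C : Set V) : Set V) := by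
  ext u
  constructor
  · intro hu
    set S := closure (C : Set V) ∩ Metric.sphere 0 1
    have hS : IsCompact S := (isCompact_sphere 0 1).inter_left isClosed_closure
    have hnhds : ∀ᶠ u' in 𝓝 u, ∀ y ∈ S, 0 < ⟪u', y⟫ :=
      hS.eventually_forall_of_forall_eventually fun y hy =>
        continuousAt_const.eventually_lt (continuous_fst.inner continuous_snd).continuousAt
          (hu y hy.1 (ne_zero_of_mem_unit_sphere ⟨y, hy.2⟩))
    refine mem_interior_iff_mem_nhds.2 (mem_of_superset hnhds fun u' hu' => mem_innerDual.2 ?_)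
    intro x hx
    rcases eq_or_ne x 0 with rfl | hx0
    · simp
    have hxS : ‖x‖⁻¹ • x ∈ S := by
      refine ⟨?_, by simp [norm_smul, hx0]⟩
      rw [← coe_closure]
      exact C.closure.smul_mem (inv_pos.2 (norm_pos_iff.2 hx0)) (subset_closure hx)
    have hpos := hu' _ hxS
    rw [real_inner_smul_right, real_inner_comm] at hpos
    exact (pos_of_mul_pos_right hpos (inv_pos.2 (norm_pos_iff.2 hx0)).le).le
  · intro hu v hv hv0
    obtain ⟨t, ht, hut⟩ := exists_pos_add_smul_mem_of_mem_interior hu (-v)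
    rw [← innerDual_closure_s19] at hut
    have h := mem_innerDual.1 hut hv
    rw [inner_add_right, real_inner_smul_right, inner_neg_right, real_inner_self_eq_norm_sq,
      real_inner_comm] at h
    have hpos : 0 < t * ‖v‖ ^ 2 := mul_pos ht (pow_pos (norm_pos_iff.2 hv0) 2)
    linarith

end ConvexCone

end InnerProductSpace

/-- Strict convex duals of intersections and Minkowski sums of proper cones: for
nonempty open convex salient cones `C₁`, `C₂` in a finite-dimensional real inner
product space with `C₁ ∩ C₂` nonempty, one has
`(C₁ ∩ C₂)^⊛ = C₁^⊛ + C₂^⊛` and `(C₁ + C₂)^⊛ = C₁^⊛ ∩ C₂^⊛`. -/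
theorem statement19 {V : Type*} [NormedAddCommGroup V] [InnerProductSpace ℝ V]
    [FiniteDimensional ℝ V]
    (C₁ C₂ : Set V)
    (h₁ne : C₁.Nonempty) (h₁open : IsOpen C₁) (h₁conv : Convex ℝ C₁)
    (h₁cone : ∀ c ∈ C₁, ∀ t : ℝ, 0 < t → t • c ∈ C₁)
    (h₁sal : closure C₁ ∩ (-closure C₁) = {0})
    (h₂ne : C₂.Nonempty) (h₂open : IsOpen C₂) (h₂conv : Convex ℝ C₂)
    (h₂cone : ∀ c ∈ C₂, ∀ t : ℝ, 0 < t → t • c ∈ C₂)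
    (h₂sal : closure C₂ ∩ (-closure C₂) = {0})
    (hcap : (C₁ ∩ C₂).Nonempty) :
    strictDual (C₁ ∩ C₂) = strictDual C₁ + strictDual C₂ ∧
    strictDual (C₁ + C₂) = strictDual C₁ ∩ strictDual C₂ := by
  obtain ⟨K₁, rfl⟩ := h₁conv.exists_convexCone_coe_eq h₁cone
  obtain ⟨K₂, rfl⟩ := h₂conv.exists_convexCone_coe_eq h₂cone
  have hint₁ := K₁.interior_innerDual_nonempty h₁ne h₁sal
  have hint₂ := K₂.interior_innerDual_nonempty h₂ne h₂sal
  constructor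
  · have hclosure : closure ((K₁ : Set V) ∩ K₂) = closure (K₁ : Set V) ∩ closure (K₂ : Set V) :=
      K₁.convex.closure_inter_eq_inter_closure K₂.convex
        (by rwa [h₁open.interior_eq, h₂open.interior_eq])
    have hsum := ConvexCone.interior_add (innerDual (K₁ : Set V) : ConvexCone ℝ V)
      (innerDual (K₂ : Set V)) hint₁ hint₂
    calc strictDual ((K₁ : Set V) ∩ K₂)
        = interior (innerDual (closure (K₁ : Set V) ∩ closure (K₂ : Set V)) : Set V) := by
          rw [← ConvexCone.coe_inf, (K₁ ⊓ K₂).strictDual_eq_interior_innerDual,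
            ConvexCone.coe_inf, ← innerDual_closure_s19, hclosure]
      _ = interior (closure
            ((innerDual (K₁ : Set V) : Set V) + (innerDual (K₂ : Set V) : Set V))) := by
          rw [K₁.innerDual_closure_inter_closure K₂ h₁ne h₂ne]
      _ = interior ((innerDual (K₁ : Set V) : Set V) + (innerDual (K₂ : Set V) : Set V)) :=
          ((innerDual _).convex.add (innerDual _).convex)
            |>.interior_closure_eq_interior_of_nonempty_interior (hsum ▸ hint₁.add hint₂)
      _ = strictDual K₁ + strictDual K₂ := by
          rw [K₁.strictDual_eq_interior_innerDual, K₂.strictDual_eq_interior_innerDual]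
          exact hsum
  · rw [← ConvexCone.coe_add, (K₁ + K₂).strictDual_eq_interior_innerDual, ConvexCone.coe_add,
      innerDual_add (K₁.zero_mem_closure h₁ne) (K₂.zero_mem_closure h₂ne),
      K₁.strictDual_eq_interior_innerDual, K₂.strictDual_eq_interior_innerDual]
    exact interior_inter
end
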